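/- arXiv:1603.00282 — 4 statements merged into one kernel-verified Lean document; each statement's English description precedes it below -/
import Mathlib

section
/- If every edge of a connected graph G on n vertices is either a cut edge or lies on a cycle of even length, then PI(G) = |E(G)| · (n - 2). -/
open SimpleGraph Finset
open scoped Classical

variable {V : Type*}

/-- Number of vertices strictly closer to `x` than to `y` (excluding `x` and `y`). -/
noncomputable def nclose (G : SimpleGraph V) (x y : V) : ℕ :=
  Nat.card {w : V | w ≠ x ∧ w ≠ y ∧ G.dist w x < G.dist w y}

/-- The contribution `PI(e) = n_{xy}(x) + n_{xy}(y)` of an edge. -/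
noncomputable def PIedge (G : SimpleGraph V) : Sym2 V → ℕ :=
  Sym2.lift ⟨fun x y => nclose G x y + nclose G y x, fun _ _ => add_comm _ _⟩

/-- The vertex PI index of a graph. -/
noncomputable def PI [Fintype V] (G : SimpleGraph V) : ℕ :=
  ∑ e ∈ G.edgeFinset, PIedge G e

/-- A cactus: connected, and any two cycles share at most one vertex. -/
def IsCactus (G : SimpleGraph V) : Prop :=
  G.Connected ∧ ∀ (u v : V) (c₁ : G.Walk u u) (c₂ : G.Walk v v),
    c₁.IsCycle → c₂.IsCycle → {e | e ∈ c₁.edges} ≠ {e | e ∈ c₂.edges} →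
    Set.ncard {x | x ∈ c₁.support ∧ x ∈ c₂.support} ≤ 1

/-!
An edge `xy` contributes `n - 2` exactly when no vertex `w ∉ {x, y}` is equidistant from `x`
and `y`. Such a `w` would give an odd cycle through `xy`. A bridge lies on no cycle, and in a
cactus two cycles sharing an edge share its two endpoints, hence coincide; so an edge on an even
cycle lies on no odd one.
-/

namespace SimpleGraph

variable {G : SimpleGraph V}

lemma Walk.dist_add_dist_of_length_eq_dist {w x u : V} (p : G.Walk w x)
    (hp : p.length = G.dist w x) (hu : u ∈ p.support) :
    G.dist w u + G.dist u x = G.dist w x := by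
  rw [← length_eq_dist_of_subwalk hp (p.isSubwalk_takeUntil hu),
    ← length_eq_dist_of_subwalk hp (p.isSubwalk_dropUntil hu), ← Walk.length_append,
    Walk.take_spec, hp]

lemma Walk.IsTrail.length_eq_of_edges_eq {u v u' v' : V} {p : G.Walk u v} {q : G.Walk u' v'}
    (hp : p.IsTrail) (hq : q.IsTrail) (h : {e | e ∈ p.edges} = {e | e ∈ q.edges}) :
    p.length = q.length := by
  rw [← Walk.length_edges, ← Walk.length_edges]
  exact ((List.perm_ext_iff_of_nodup hp.edges_nodup hq.edges_nodup).mpr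
    (Set.ext_iff.mp h)).length_eq

theorem Walk.IsPath.isCycle_cons_reverse_append {w x y : V} {P : G.Walk w x} {Q : G.Walk w y}
    (hP : P.IsPath) (hQ : Q.IsPath) (hadj : G.Adj x y) (hwx : w ≠ x) (hwy : w ≠ y)
    (hmeet : ∀ u ∈ P.support, u ∈ Q.support → u = w) :
    ((Walk.cons hadj Q.reverse).append P).IsCycle := by
  have hxQ : x ∉ Q.support := fun hx => hwx (hmeet x P.end_mem_support hx).symm
  have hdisj : Q.reverse.support.Disjoint P.support.tail := by
    intro u huQ huP
    rw [Walk.support_reverse, List.mem_reverse] at huQ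
    rw [hmeet u (List.mem_of_mem_tail huP) huQ] at huP
    have hnd := hP.support_nodup
    rw [← P.cons_tail_support] at hnd
    exact (List.nodup_cons.mp hnd).1 huP
  have hQlen : Q.length ≠ 0 := fun h => hwy (Walk.eq_of_length_eq_zero h)
  refine ((Walk.cons_isPath_iff hadj _).mpr ⟨hQ.reverse, by simpa using hxQ⟩).isCycle_append
    hP hdisj (Or.inl ?_)
  simp only [Walk.length_cons, Walk.length_reverse]
  omega

/-- If the geodesics `w ⟶ x` and `w ⟶ y` meet at some `u ≠ w`, then `u` is again
equidistant from `x` and `y`, and closer to them than `w`; otherwise they close up with the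
edge `xy` to a cycle of length `2 d(w, x) + 1`. -/
theorem Connected.exists_odd_cycle_of_dist_eq (hconn : G.Connected) {x y w : V}
    (hadj : G.Adj x y) (hwx : w ≠ x) (hwy : w ≠ y) (hd : G.dist w x = G.dist w y) :
    ∃ c : G.Walk x x, c.IsCycle ∧ s(x, y) ∈ c.edges ∧ Odd c.length := by
  induction hdw : G.dist w x using Nat.strong_induction_on generalizing w with
  | _ d ih =>
  obtain ⟨P, hP, hPl⟩ := hconn.exists_path_of_dist w x
  obtain ⟨Q, hQ, hQl⟩ := hconn.exists_path_of_dist w y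
  by_cases hmeet : ∃ u ∈ P.support, u ∈ Q.support ∧ u ≠ w
  · obtain ⟨u, huP, huQ, huw⟩ := hmeet
    have hPu := P.dist_add_dist_of_length_eq_dist hPl huP
    have hQu := Q.dist_add_dist_of_length_eq_dist hQl huQ
    have hwu := hconn.pos_dist_of_ne huw.symm
    have hux : u ≠ x := by
      rintro rfl
      exact hadj.ne (hconn.dist_eq_zero_iff.mp (by omega))
    have huy : u ≠ y := by
      rintro rfl
      exact hadj.ne (hconn.dist_eq_zero_iff.mp (by omega)).symm
    exact ih (G.dist u x) (by omega) hux huy (by omega) rfl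
  push Not at hmeet
  refine ⟨_, hP.isCycle_cons_reverse_append hQ hadj hwx hwy hmeet, by simp, ⟨d, ?_⟩⟩
  simp only [Walk.length_append, Walk.length_cons, Walk.length_reverse]
  omega

theorem IsCactus.length_eq_of_mem_edges (hG : IsCactus G) {u v : V} {e : Sym2 V}
    {c₁ : G.Walk u u} {c₂ : G.Walk v v} (h₁ : c₁.IsCycle) (h₂ : c₂.IsCycle)
    (he₁ : e ∈ c₁.edges) (he₂ : e ∈ c₂.edges) : c₁.length = c₂.length := by
  refine h₁.isTrail.length_eq_of_edges_eq h₂.isTrail (by_contra fun hne => ?_)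
  have hle := hG.2 u v c₁ c₂ h₁ h₂ hne
  induction e using Sym2.ind with
  | _ a b =>
  have hab : ({a, b} : Set V) ⊆ {x | x ∈ c₁.support ∧ x ∈ c₂.support} := by
    rintro z (rfl | rfl)
    · exact ⟨c₁.fst_mem_support_of_mem_edges he₁, c₂.fst_mem_support_of_mem_edges he₂⟩
    · exact ⟨c₁.snd_mem_support_of_mem_edges he₁, c₂.snd_mem_support_of_mem_edges he₂⟩
  have hfin : {x | x ∈ c₁.support ∧ x ∈ c₂.support}.Finite :=
    c₁.support.finite_toSet.subset fun _ hx => hx.1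
  have := Set.ncard_le_ncard hab hfin
  rw [Set.ncard_pair (c₁.adj_of_mem_edges he₁).ne] at this
  omega

end SimpleGraph

lemma nclose_add_nclose_eq [Fintype V] (G : SimpleGraph V) {x y : V} (hxy : x ≠ y)
    (hne : ∀ w, w ≠ x → w ≠ y → G.dist w x ≠ G.dist w y) :
    nclose G x y + nclose G y x = Fintype.card V - 2 := by
  have hcard : ∀ a b,
      nclose G a b = #(({a, b} : Finset V)ᶜ.filter fun w => G.dist w a < G.dist w b) := by
    intro a b
    rw [nclose, ← Nat.card_eq_finsetCard]
    congr
    ext w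
    simp only [mem_val, mem_filter, mem_compl, mem_insert, mem_singleton, not_or,
      and_assoc]
  have hyx : ({y, x} : Finset V)ᶜ.filter (fun w => G.dist w y < G.dist w x) =
      ({x, y} : Finset V)ᶜ.filter (fun w => ¬ G.dist w x < G.dist w y) := by
    rw [pair_comm]
    refine filter_congr fun w hw => ?_
    simp only [mem_compl, mem_insert, mem_singleton, not_or] at hw
    have := hne w hw.1 hw.2
    omega
  rw [hcard, hcard, hyx, card_filter_add_card_filter_not, card_compl, card_pair hxy]

theorem stmt_9 [Fintype V] (G : SimpleGraph V) (hG : IsCactus G)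
    (h : ∀ e ∈ G.edgeSet, G.IsBridge e ∨
      ∃ (v : V) (c : G.Walk v v), c.IsCycle ∧ e ∈ c.edges ∧ Even c.length) :
    PI G = G.edgeFinset.card * (Fintype.card V - 2) := by
  have hPIedge : ∀ e ∈ G.edgeFinset, PIedge G e = Fintype.card V - 2 := by
    intro e he
    induction e using Sym2.ind with
    | _ x y =>
    have hadj : G.Adj x y := mem_edgeFinset.mp he
    refine nclose_add_nclose_eq G hadj.ne fun w hwx hwy hd => ?_
    obtain ⟨c, hc, hxyc, hodd⟩ := hG.1.exists_odd_cycle_of_dist_eq hadj hwx hwy hd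
    rcases h s(x, y) (mem_edgeFinset.mp he) with hb | ⟨v, C, hC, hxyC, heven⟩
    · exact hb.notMem_edges_of_isCycle hc hxyc
    · rw [← hG.length_eq_of_mem_edges hc hC hxyc hxyC] at heven
      exact Nat.not_even_iff_odd.mpr hodd heven
  rw [PI, sum_congr rfl hPIedge, sum_const, smul_eq_mul]
end

section
/- Let G be a cactus on n vertices and let C = v_1v_2...v_av_1 be a cycle of G of odd length a. Let B_1,...,B_a be the components of G - E(C) with v_i ∈ B_i. Then for any edge v_l v_{l+1} of C, PI(v_l v_{l+1}) = n - 2 - |B_t|, where v_t is the unique vertex of C equidistant from v_l and v_{l+1}. -/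
open SimpleGraph Finset
open scoped Classical

variable {V : Type*}

/-!
Deleting the edges of the cycle `C` from a cactus attaches every vertex `w` to exactly one
vertex `r(w)` of `C`: two vertices of `C` joined off `C` would, together with an arc of `C`,
give a second cycle meeting `C` in two vertices. Every walk from `w` to `C` passes through
`r(w)`, so `d(w, x) = d(w, r(w)) + d(r(w), x)` for `x` on `C`; and `C` is isometric in `G`,
because along any walk the position of `r` on `C` moves by at most one step per edge.
Hence `w` is equidistant from `v_l` and `v_{l+1}` iff `r(w)` is, which on an odd cycle
happens only for `r(w) = v_t`, i.e. for `w ∈ B_t`. Every other vertex but `v_l`, `v_{l+1}`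
is strictly closer to one of the two ends.
-/

namespace ZMod

lemma natAbs_valMinAbs_one_le (n : ℕ) : (1 : ZMod n).valMinAbs.natAbs ≤ 1 := by
  rcases n with _ | n
  · rfl
  · rw [valMinAbs_natAbs_eq_min, val_one_eq_one_mod]
    have := Nat.mod_le 1 (n + 1)
    omega

lemma natAbs_valMinAbs_eq_natAbs_valMinAbs_add_one_iff {n k : ℕ} (hn : n = 2 * k + 1)
    (z : ZMod n) : z.valMinAbs.natAbs = (z + 1).valMinAbs.natAbs ↔ z = k := by
  subst hn
  rw [valMinAbs_natAbs_eq_min, valMinAbs_natAbs_eq_min, val_add, val_one_eq_one_mod,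
    ← (val_injective _).eq_iff, val_natCast]
  have hz := z.val_lt
  rcases k.eq_zero_or_pos with rfl | hk
  · omega
  rw [Nat.mod_eq_of_lt (by omega : 1 < 2 * k + 1), Nat.mod_eq_of_lt (by omega : k < 2 * k + 1)]
  rcases Nat.lt_or_ge (z.val + 1) (2 * k + 1) with h | h
  · rw [Nat.mod_eq_of_lt h]; omega
  · rw [show z.val + 1 = 2 * k + 1 by omega, Nat.mod_self]; omega

end ZMod

namespace SimpleGraph.Walk

variable {G : SimpleGraph V} {u v : V}

lemma dist_getVert_le (p : G.Walk u v) {i j : ℕ} (hij : i ≤ j) :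
    G.dist (p.getVert i) (p.getVert j) ≤ j - i := by
  have hj : p.getVert (i + (j - i)) = p.getVert j := by rw [Nat.add_sub_cancel' hij]
  calc G.dist (p.getVert i) (p.getVert j)
      ≤ (((p.drop i).take (j - i)).copy rfl (by rw [drop_getVert, hj])).length :=
        dist_le _
    _ ≤ j - i := by simp

lemma getVert_val_natCast (c : G.Walk v v) {i : ℕ} (hi : i ≤ c.length) :
    c.getVert (i : ZMod c.length).val = c.getVert i := by
  rcases hi.lt_or_eq with hi | rfl
  · rw [ZMod.val_natCast, Nat.mod_eq_of_lt hi]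
  · rw [ZMod.natCast_self, ZMod.val_zero, getVert_zero, getVert_length]

lemma IsCycle.injective_getVert_val {c : G.Walk v v} (hc : c.IsCycle) :
    Function.Injective fun z : ZMod c.length => c.getVert z.val := by
  have : NeZero c.length := ⟨by have := hc.three_le_length; omega⟩
  intro z z' h
  have hz := z.val_lt
  have hz' := z'.val_lt
  exact ZMod.val_injective _ <| hc.getVert_injOn' (by simp only [Set.mem_ofPred_eq]; omega)
    (by simp only [Set.mem_ofPred_eq]; omega) h

lemma exists_mem_edges_of_ne {x y : V} (p : G.Walk x y) (hxy : x ≠ y) : ∃ e, e ∈ p.edges :=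
  List.exists_mem_of_length_pos <| by
    rw [length_edges]
    exact Nat.pos_of_ne_zero fun h => hxy (length_eq_zero_iff.1 h).eq

lemma IsCycle.exists_isPath_subset {x y : V} {c : G.Walk v v} (hc : c.IsCycle)
    (hx : x ∈ c.support) (hy : y ∈ c.support) :
    ∃ r : G.Walk x y, r.IsPath ∧ r.edges ⊆ c.edges ∧ r.support ⊆ c.support := by
  have hy' : y ∈ (c.rotate x hx).support := (c.mem_support_rotate_iff x hx).2 hy
  exact ⟨_, (hc.rotate hx).isPath_takeUntil hy',
    fun e he => (c.rotate_edges x hx).mem_iff.1 (edges_takeUntil_subset_edges _ hy' he),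
    fun z hz => (c.mem_support_rotate_iff x hx).1 (support_takeUntil_subset_support _ hy' hz)⟩

lemma exists_reachable_deleteEdges {w x : V} (p : G.Walk w x) {c : G.Walk u v}
    (hx : x ∈ c.support) :
    ∃ y ∈ c.support, (G.deleteEdges {e | e ∈ c.edges}).Reachable w y := by
  induction p with
  | nil => exact ⟨_, hx, .rfl⟩
  | @cons w w₂ _ h q ih =>
    by_cases hec : s(w, w₂) ∈ c.edges
    · exact ⟨w, c.fst_mem_support_of_mem_edges hec, .rfl⟩
    · obtain ⟨y, hy, hw₂y⟩ := ih hx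
      exact ⟨y, hy, (deleteEdges_adj.2 ⟨h, hec⟩).reachable.trans hw₂y⟩

end SimpleGraph.Walk

lemma nclose_add_nclose_of_adj [Fintype V] {G : SimpleGraph V} {a b : V} (hab : G.Adj a b) :
    nclose G a b + nclose G b a =
      Fintype.card V - 2 - Nat.card {w | G.dist w a = G.dist w b} := by
  have hcard : ∀ (P : V → Prop) [DecidablePred P],
      Nat.card {w | P w} = ∑ w, if P w then 1 else 0 := fun P _ => by
    simp [Nat.card_eq_fintype_card, Fintype.card_subtype]
  have hdab : G.dist a b = 1 := dist_eq_one_iff_adj.2 hab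
  have hdba : G.dist b a = 1 := dist_eq_one_iff_adj.2 hab.symm
  have hpart : ∀ w, (if w ≠ a ∧ w ≠ b ∧ G.dist w a < G.dist w b then 1 else 0) +
      (if w ≠ b ∧ w ≠ a ∧ G.dist w b < G.dist w a then 1 else 0) +
      (if G.dist w a = G.dist w b then 1 else 0) + (if a = w then 1 else 0) +
      (if b = w then 1 else 0) = 1 := by
    intro w
    rcases eq_or_ne w a with rfl | hwa
    · simp [hab.ne, hab.ne.symm, hdab]
    rcases eq_or_ne w b with rfl | hwb
    · simp [hwa, hwa.symm, hdba]
    simp only [hwa, hwb, hwa.symm, hwb.symm, ne_eq, not_false_eq_true, true_and, if_false]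
    rcases lt_trichotomy (G.dist w a) (G.dist w b) with h | h | h
    · simp [h, h.ne, not_lt.2 h.le]
    · simp [h]
    · simp [h, h.ne', not_lt.2 h.le]
  have := Finset.sum_congr rfl fun w (_ : w ∈ (univ : Finset V)) => hpart w
  simp only [Finset.sum_add_distrib, Finset.sum_ite_eq, Finset.mem_univ, if_true,
    Finset.sum_const, smul_eq_mul, mul_one, card_univ] at this
  rw [nclose, nclose, hcard, hcard, hcard]
  omega

namespace SimpleGraph

variable {G : SimpleGraph V} {v : V}

/-- The position on `c` of the vertex that `w` reaches without using edges of `c` (`0` if there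
is none). For a cycle of a cactus this vertex exists and is unique. -/
noncomputable def cycleRoot (c : G.Walk v v) (w : V) : ZMod c.length :=
  if h : ∃ z : ZMod c.length, (G.deleteEdges {e | e ∈ c.edges}).Reachable w (c.getVert z.val)
  then h.choose else 0

variable {c : G.Walk v v}

theorem IsCactus.not_reachable_deleteEdges (hG : IsCactus G) (hc : c.IsCycle) {x y : V}
    (hx : x ∈ c.support) (hy : y ∈ c.support) (hxy : x ≠ y) :
    ¬(G.deleteEdges {e | e ∈ c.edges}).Reachable x y := by
  rintro ⟨q⟩
  let p : G.Walk x y := q.bypass.mapLe (G.deleteEdges_le _)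
  have hp : p.IsPath := q.bypass_isPath.mapLe _
  have hpC : ∀ e ∈ p.edges, e ∉ c.edges := fun e he => by
    rw [Walk.edges_mapLe_eq_edges] at he
    exact ((G.edgeSet_deleteEdges _) ▸ q.bypass.edges_subset_edgeSet he).2
  obtain ⟨r, hr, hrC, hrS⟩ := hc.exists_isPath_subset hx hy
  obtain ⟨e, he⟩ := p.exists_mem_edges_of_ne hxy
  -- pieces of the distinct paths `p` (off `c`) and `r` (along `c`) close up a second cycle
  obtain ⟨x', y', p', r', hp', hr', hcyc⟩ := hp.exists_isCycle_of_ne hr fun h =>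
    hpC e he (hrC (h ▸ he))
  have hx'y' : x' ≠ y' := by
    rintro rfl
    exact hcyc.not_nil <| Walk.nil_append_iff.2
      ⟨Walk.isPath_iff_nil.1 (Walk.isPath_of_isSubwalk hp' hp),
        Walk.nil_reverse.2 (Walk.isPath_iff_nil.1 (Walk.isPath_of_isSubwalk hr' hr))⟩
  obtain ⟨e', he'⟩ := p'.exists_mem_edges_of_ne hx'y'
  have he'c : e' ∈ (p'.append r'.reverse).edges := by
    rw [Walk.edges_append]; exact List.mem_append_left _ he'
  have hne : {e | e ∈ (p'.append r'.reverse).edges} ≠ {e | e ∈ c.edges} := fun h =>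
    hpC e' (hp'.edges_subset he') (show e' ∈ {e | e ∈ c.edges} from h ▸ he'c)
  have hsub : ({x', y'} : Set V) ⊆
      {z | z ∈ (p'.append r'.reverse).support ∧ z ∈ c.support} := by
    rintro z (rfl | rfl)
    · exact ⟨Walk.start_mem_support _, hrS (hr'.support_subset r'.start_mem_support)⟩
    · exact ⟨Walk.mem_support_append_iff _ _ |>.2 (Or.inl p'.end_mem_support),
        hrS (hr'.support_subset r'.end_mem_support)⟩
  have := Set.ncard_le_ncard hsub
    ((p'.append r'.reverse).support.finite_toSet.subset fun z hz => hz.1)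
  have := hG.2 x' v _ c hcyc hc hne
  rw [Set.ncard_pair hx'y'] at *
  omega

theorem Connected.reachable_getVert_cycleRoot (hG : G.Connected) (w : V) :
    (G.deleteEdges {e | e ∈ c.edges}).Reachable w (c.getVert (cycleRoot c w).val) := by
  have h : ∃ z : ZMod c.length,
      (G.deleteEdges {e | e ∈ c.edges}).Reachable w (c.getVert z.val) := by
    obtain ⟨p⟩ := hG w v
    obtain ⟨y, hy, hwy⟩ := p.exists_reachable_deleteEdges c.start_mem_support
    obtain ⟨i, rfl, hi⟩ := Walk.mem_support_iff_exists_getVert.1 hy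
    exact ⟨i, by rwa [c.getVert_val_natCast hi]⟩
  rw [cycleRoot, dif_pos h]
  exact h.choose_spec

namespace IsCactus

theorem cycleRoot_eq_of_reachable (hG : IsCactus G) (hc : c.IsCycle) {w : V}
    {z : ZMod c.length} (h : (G.deleteEdges {e | e ∈ c.edges}).Reachable w (c.getVert z.val)) :
    cycleRoot c w = z := by
  by_contra hne
  exact hG.not_reachable_deleteEdges hc (c.getVert_mem_support _) (c.getVert_mem_support _)
    (hne ∘ (hc.injective_getVert_val ·)) ((hG.1.reachable_getVert_cycleRoot w).symm.trans h)

theorem cycleRoot_getVert (hG : IsCactus G) (hc : c.IsCycle) {i : ℕ} (hi : i ≤ c.length) :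
    cycleRoot c (c.getVert i) = i :=
  hG.cycleRoot_eq_of_reachable hc (by rw [c.getVert_val_natCast hi])

theorem getVert_cycleRoot (hG : IsCactus G) (hc : c.IsCycle) {x : V} (hx : x ∈ c.support) :
    c.getVert (cycleRoot c x).val = x := by
  obtain ⟨i, rfl, hi⟩ := Walk.mem_support_iff_exists_getVert.1 hx
  rw [hG.cycleRoot_getVert hc hi, c.getVert_val_natCast hi]

theorem reachable_deleteEdges_iff (hG : IsCactus G) (hc : c.IsCycle) {w t : V}
    (ht : t ∈ c.support) :
    (G.deleteEdges {e | e ∈ c.edges}).Reachable w t ↔ cycleRoot c w = cycleRoot c t := by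
  conv_lhs => rw [← hG.getVert_cycleRoot hc ht]
  exact ⟨hG.cycleRoot_eq_of_reachable hc, fun h => h ▸ hG.1.reachable_getVert_cycleRoot w⟩

theorem mem_support_of_reachable_deleteEdges (hG : IsCactus G) (hc : c.IsCycle) {r w x : V}
    (hr : r ∈ c.support) (p : G.Walk w x) (hx : x ∈ c.support) :
    (G.deleteEdges {e | e ∈ c.edges}).Reachable w r → r ∈ p.support := by
  induction p with
  | @nil u =>
    intro hwr
    rcases eq_or_ne r u with rfl | hne
    · exact Walk.start_mem_support _
    · exact absurd hwr.symm (hG.not_reachable_deleteEdges hc hr hx hne)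
  | @cons w w₂ _ h q ih =>
    intro hwr
    by_cases hec : s(w, w₂) ∈ c.edges
    · rcases eq_or_ne r w with rfl | hne
      · exact Walk.start_mem_support _
      · exact absurd hwr.symm
          (hG.not_reachable_deleteEdges hc hr (c.fst_mem_support_of_mem_edges hec) hne)
    · exact List.mem_cons_of_mem _
        (ih hx ((deleteEdges_adj.2 ⟨h, hec⟩).symm.reachable.trans hwr))

theorem dist_eq_dist_add_dist (hG : IsCactus G) (hc : c.IsCycle) {r w x : V}
    (hr : r ∈ c.support) (hwr : (G.deleteEdges {e | e ∈ c.edges}).Reachable w r)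
    (hx : x ∈ c.support) : G.dist w x = G.dist w r + G.dist r x := by
  obtain ⟨p, hp⟩ := hG.1.exists_walk_length_eq_dist w x
  have hrp := hG.mem_support_of_reachable_deleteEdges hc hr p hx hwr
  refine le_antisymm hG.1.dist_triangle ?_
  calc _ ≤ (p.takeUntil r hrp).length + (p.dropUntil r hrp).length :=
        add_le_add (dist_le _) (dist_le _)
    _ = G.dist w x := by rw [← Walk.length_append, Walk.take_spec, hp]

theorem natAbs_valMinAbs_cycleRoot_sub_le_one (hG : IsCactus G) (hc : c.IsCycle) {x y : V}
    (h : G.Adj x y) : (cycleRoot c y - cycleRoot c x).valMinAbs.natAbs ≤ 1 := by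
  by_cases hec : s(x, y) ∈ c.edges
  · obtain ⟨i, hi, hei⟩ := c.mk_mem_edges_iff_exists.1 hec
    rcases Sym2.eq_iff.1 hei with ⟨rfl, rfl⟩ | ⟨rfl, rfl⟩
    · rw [hG.cycleRoot_getVert hc hi, hG.cycleRoot_getVert hc hi.le, Nat.cast_succ,
        add_sub_cancel_left]
      exact ZMod.natAbs_valMinAbs_one_le _
    · rw [hG.cycleRoot_getVert hc hi, hG.cycleRoot_getVert hc hi.le, Nat.cast_succ,
        sub_add_cancel_left, ZMod.natAbs_valMinAbs_neg]
      exact ZMod.natAbs_valMinAbs_one_le _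
  · rw [hG.cycleRoot_eq_of_reachable hc ((deleteEdges_adj.2 ⟨h, hec⟩).reachable.trans
      (hG.1.reachable_getVert_cycleRoot y)), sub_self, ZMod.valMinAbs_zero]
    exact zero_le_one

theorem natAbs_valMinAbs_cycleRoot_sub_le_length (hG : IsCactus G) (hc : c.IsCycle) {x y : V}
    (p : G.Walk x y) : (cycleRoot c y - cycleRoot c x).valMinAbs.natAbs ≤ p.length := by
  induction p with
  | nil => simp
  | @cons x x₂ y h q ih =>
    calc (cycleRoot c y - cycleRoot c x).valMinAbs.natAbs
        ≤ ((cycleRoot c y - cycleRoot c x₂).valMinAbs +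
            (cycleRoot c x₂ - cycleRoot c x).valMinAbs).natAbs := by
          rw [← sub_add_sub_cancel (cycleRoot c y) (cycleRoot c x₂)]
          exact ZMod.natAbs_valMinAbs_add_le _ _
      _ ≤ q.length + 1 := (Int.natAbs_add_le _ _).trans
          (add_le_add ih (hG.natAbs_valMinAbs_cycleRoot_sub_le_one hc h))
      _ = (q.cons h).length := (Walk.length_cons h q).symm

theorem dist_getVert_val (hG : IsCactus G) (hc : c.IsCycle) (z z' : ZMod c.length) :
    G.dist (c.getVert z.val) (c.getVert z'.val) = (z' - z).valMinAbs.natAbs := by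
  have : NeZero c.length := ⟨by have := hc.three_le_length; omega⟩
  refine le_antisymm ?_ ?_
  · wlog hzz' : z.val ≤ z'.val generalizing z z'
    · rw [dist_comm, ← neg_sub, ZMod.natAbs_valMinAbs_neg]
      exact this z' z ((not_le.1 hzz').le)
    rw [ZMod.valMinAbs_natAbs_eq_min, ZMod.val_sub hzz']
    refine le_min (c.dist_getVert_le hzz') ?_
    calc G.dist (c.getVert z.val) (c.getVert z'.val)
        = G.dist (c.getVert z'.val) (c.getVert z.val) := dist_comm
      _ ≤ G.dist (c.getVert z'.val) (c.getVert c.length) +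
            G.dist (c.getVert 0) (c.getVert z.val) := by
          rw [c.getVert_length, c.getVert_zero]
          exact hG.1.dist_triangle
      _ ≤ (c.length - z'.val) + (z.val - 0) :=
          add_le_add (c.dist_getVert_le z'.val_lt.le) (c.dist_getVert_le (Nat.zero_le _))
      _ ≤ c.length - (z'.val - z.val) := by have := z'.val_lt; omega
  · obtain ⟨p, hp⟩ := hG.1.exists_walk_length_eq_dist (c.getVert z.val) (c.getVert z'.val)
    have := hG.natAbs_valMinAbs_cycleRoot_sub_le_length hc p
    rwa [hG.cycleRoot_eq_of_reachable hc .rfl, hG.cycleRoot_eq_of_reachable hc .rfl, hp] at this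

theorem dist_eq_dist_iff_cycleRoot_eq (hG : IsCactus G) (hc : c.IsCycle) {k : ℕ}
    (hk : c.length = 2 * k + 1) (l : ZMod c.length) (w : V) :
    G.dist w (c.getVert l.val) = G.dist w (c.getVert (l + 1).val) ↔ cycleRoot c w = l - k := by
  have hw := hG.1.reachable_getVert_cycleRoot (c := c) w
  have hsplit := fun x : ZMod c.length =>
    hG.dist_eq_dist_add_dist hc (c.getVert_mem_support _) hw (c.getVert_mem_support x.val)
  rw [hsplit l, hsplit (l + 1), add_right_inj, hG.dist_getVert_val hc, hG.dist_getVert_val hc,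
    add_sub_right_comm, ZMod.natAbs_valMinAbs_eq_natAbs_valMinAbs_add_one_iff hk]
  exact ⟨fun h => by rw [← h]; ring, fun h => by rw [h]; ring⟩

theorem setOf_dist_eq_dist_eq_supp (hG : IsCactus G) (hc : c.IsCycle) (hodd : Odd c.length)
    (l : ZMod c.length) {t : V} (ht : t ∈ c.support)
    (htd : G.dist t (c.getVert l.val) = G.dist t (c.getVert (l + 1).val)) :
    {w | G.dist w (c.getVert l.val) = G.dist w (c.getVert (l + 1).val)} =
      ((G.deleteEdges {e | e ∈ c.edges}).connectedComponentMk t).supp := by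
  obtain ⟨k, hk⟩ := hodd
  ext w
  rw [Set.mem_ofPred_eq, hG.dist_eq_dist_iff_cycleRoot_eq hc hk,
    ConnectedComponent.mem_supp_iff, ConnectedComponent.eq, hG.reachable_deleteEdges_iff hc ht,
    (hG.dist_eq_dist_iff_cycleRoot_eq hc hk l t).1 htd]

end IsCactus

end SimpleGraph

theorem stmt_10 [Fintype V] (G : SimpleGraph V) (hG : IsCactus G)
    (v : V) (c : G.Walk v v) (hc : c.IsCycle) (hodd : Odd c.length)
    (a b : V) (he : s(a, b) ∈ c.edges)
    (t : V) (ht : t ∈ c.support) (htd : G.dist t a = G.dist t b) :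
    nclose G a b + nclose G b a =
      Fintype.card V - 2 -
        Nat.card ((G.deleteEdges {e | e ∈ c.edges}).connectedComponentMk t).supp := by
  obtain ⟨i, hi, hei⟩ := c.mk_mem_edges_iff_exists.1 he
  wlog hab : c.getVert i = a ∧ c.getVert (i + 1) = b generalizing a b
  · rw [add_comm]
    exact this b a (Sym2.eq_swap ▸ he) htd.symm (hei.trans Sym2.eq_swap)
      ((Sym2.eq_iff.1 hei).resolve_left hab)
  obtain ⟨rfl, rfl⟩ := hab
  have hl : c.getVert (i : ZMod c.length).val = c.getVert i := c.getVert_val_natCast hi.le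
  have hl1 : c.getVert ((i : ZMod c.length) + 1).val = c.getVert (i + 1) := by
    rw [← Nat.cast_succ, c.getVert_val_natCast hi]
  rw [← hl, ← hl1] at htd
  rw [nclose_add_nclose_of_adj (c.adj_of_mem_edges he), ← hl, ← hl1,
    hG.setOf_dist_eq_dist_eq_supp hc hodd _ ht htd]
end

section
/- Let G be a cactus on n vertices containing an edge e lying on an odd cycle. Then PI(e) ≤ n - 3. -/
open SimpleGraph Finset
open scoped Classical

variable {V : Type*}

/-! In a cactus every cycle `c` is isometric. Indeed, cut a shortest walk between two vertices
of `c` at its visits to `c`: a piece meeting `c` only at its ends must be an edge of `c`, since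
otherwise it closes, together with an arc of `c`, a second cycle sharing two vertices with `c`.
Recording positions on `c` in `ZMod c.length`, each piece moves the position by `±1`, so the walk
is at least as long as the shorter arc of `c`.

If `c` has length `2k + 1` and `xy` is one of its edges, the vertex opposite `xy` on `c` is thus
at distance `k` from both `x` and `y`; it is counted in neither `n_{xy}(x)` nor `n_{xy}(y)`, and
neither are `x` and `y`, whence `PI(xy) ≤ n - 3`. -/

variable {G : SimpleGraph V}

namespace SimpleGraph.Walk

lemma dist_getVert_le_sub {u v : V} (p : G.Walk u v) {i j : ℕ} (hij : i ≤ j) :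
    G.dist (p.getVert i) (p.getVert j) ≤ j - i := by
  calc G.dist (p.getVert i) (p.getVert j)
      = G.dist (p.getVert i) ((p.drop i).getVert (j - i)) := by
        rw [drop_getVert, Nat.add_sub_cancel' hij]
    _ ≤ ((p.drop i).take (j - i)).length := dist_le _
    _ ≤ j - i := by simp

lemma dist_getVert_le_length_sub {v : V} (c : G.Walk v v) {i j : ℕ} (hij : i ≤ j)
    (hj : j ≤ c.length) :
    G.dist (c.getVert i) (c.getVert j) ≤ c.length - (j - i) := by
  have h := dist_le ((c.drop j).append (c.take i))
  rw [length_append, drop_length, take_length, dist_comm] at h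
  omega

lemma IsPath.start_notMem_support_tail {u v : V} {p : G.Walk u v} (hp : p.IsPath) :
    u ∉ p.support.tail :=
  (List.nodup_cons.mp (p.cons_tail_support ▸ hp.support_nodup)).1

lemma mk_mem_edges_of_length_eq_one {u v : V} {p : G.Walk u v} (hp : p.length = 1) :
    s(u, v) ∈ p.edges :=
  p.mk_mem_edges_iff_exists.mpr ⟨0, by omega, by rw [getVert_zero, zero_add, ← hp, getVert_length]⟩

/-- Position of `u` on `c`, counted modulo `c.length`; meaningless when `u ∉ c.support`. -/
noncomputable def cyclePos {v : V} (c : G.Walk v v) (u : V) : ZMod c.length :=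
  c.support.idxOf u

lemma IsCycle.cyclePos_getVert {v : V} {c : G.Walk v v} (hc : c.IsCycle) {i : ℕ}
    (hi : i ≤ c.length) : c.cyclePos (c.getVert i) = i := by
  by_cases hv : c.getVert i = v
  · rw [cyclePos, hv, ← cons_tail_support, List.idxOf_cons_self]
    rcases (hc.getVert_endpoint_iff hi).mp hv with rfl | rfl <;> simp
  · have hmem := c.getVert_mem_support i
    have hlt := List.idxOf_lt_length_of_mem hmem
    rw [length_support] at hlt
    have hback := c.getVert_support_idxOf hmem
    have hin : i ≠ c.length := by rintro rfl; exact hv c.getVert_length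
    have hidx : c.support.idxOf (c.getVert i) ≠ c.length := by
      intro h; rw [h, getVert_length] at hback; exact hv hback.symm
    rw [cyclePos, hc.getVert_injOn' (by simp only [Set.mem_ofPred_eq]; omega)
      (by simp only [Set.mem_ofPred_eq]; omega) hback]

lemma IsCycle.cyclePos_sub_eq_one_or {v a b : V} {c : G.Walk v v} (hc : c.IsCycle)
    (h : s(a, b) ∈ c.edges) :
    c.cyclePos b - c.cyclePos a = 1 ∨ c.cyclePos b - c.cyclePos a = -1 := by
  obtain ⟨i, hi, hab⟩ := c.mk_mem_edges_iff_exists.mp h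
  rcases Sym2.eq_iff.mp hab with ⟨rfl, rfl⟩ | ⟨rfl, rfl⟩ <;>
    rw [hc.cyclePos_getVert hi.le, hc.cyclePos_getVert hi, Nat.cast_succ] <;>
    [left; right] <;> ring

end SimpleGraph.Walk

open Walk

lemma IsCactus.mk_mem_edges_of_isPath (hG : IsCactus G) {v a b : V} {c : G.Walk v v}
    (hc : c.IsCycle) (ha : a ∈ c.support) (hb : b ∈ c.support) (hab : a ≠ b)
    {P : G.Walk a b} (hP : P.IsPath) (hPc : ∀ u ∈ P.support, u ∈ c.support → u = a ∨ u = b) :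
    s(a, b) ∈ c.edges := by
  -- `A` runs along `c` from `a` to `b`; closed up by `P` it would be a second cycle through `a, b`
  by_contra habc
  have hb' : b ∈ (c.rotate a ha).support := (mem_support_rotate_iff c a ha).mpr hb
  set A := (c.rotate a ha).takeUntil b hb'
  have hA : A.IsPath := (hc.rotate ha).isPath_takeUntil hb'
  have hAc : ∀ u ∈ A.support, u ∈ c.support := fun u hu =>
    (mem_support_rotate_iff c a ha).mp (support_takeUntil_subset_support _ hb' hu)
  have hAlen : 1 < A.length := by
    have h0 : A.length ≠ 0 := fun h => hab (eq_of_length_eq_zero h)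
    have h1 : A.length ≠ 1 := fun h => habc <| (rotate_edges c a ha).mem_iff.mp <|
      edges_takeUntil_subset_edges _ hb' (mk_mem_edges_of_length_eq_one h)
    omega
  have hPnil : ¬ P.Nil := not_nil_of_ne hab
  -- the first edge of `P` leaves the cycle: either it is `s(a, b)`, or its far end is off `c`
  have hfc : s(a, P.snd) ∉ c.edges := by
    by_cases hsb : P.snd = b
    · rwa [hsb]
    · intro hf
      rcases hPc _ (P.getVert_mem_support 1) (c.snd_mem_support_of_mem_edges hf) with h | h
      · exact (P.adj_snd hPnil).ne h.symm
      · exact hsb h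
  have hC : (A.append P.reverse).IsCycle := by
    refine hA.isCycle_append hP.reverse (fun u huA huP => ?_) (Or.inl hAlen)
    rw [support_reverse] at huP
    rcases hPc u (List.mem_reverse.mp (List.mem_of_mem_tail huP))
      (hAc u (List.mem_of_mem_tail huA)) with rfl | rfl
    · exact hA.start_notMem_support_tail huA
    · exact hP.reverse.start_notMem_support_tail (by rwa [support_reverse])
  have hedges : {e | e ∈ c.edges} ≠ {e | e ∈ (A.append P.reverse).edges} := by
    intro h
    have hfC : s(a, P.snd) ∈ {e | e ∈ (A.append P.reverse).edges} := by
      rw [Set.mem_ofPred_eq, edges_append, edges_reverse]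
      exact List.mem_append_right _ (List.mem_reverse.mpr (mk_start_snd_mem_edges hPnil))
    exact hfc (h ▸ hfC : s(a, P.snd) ∈ {e | e ∈ c.edges})
  have hcommon : ({a, b} : Set V) ⊆ {u | u ∈ c.support ∧ u ∈ (A.append P.reverse).support} := by
    rintro u (rfl | rfl)
    · exact ⟨ha, start_mem_support _⟩
    · exact ⟨hb, (mem_support_append_iff _ _).mpr (Or.inl A.end_mem_support)⟩
  have htwo := Set.ncard_le_ncard hcommon (c.support.finite_toSet.subset fun u hu => hu.1)
  rw [Set.ncard_pair hab] at htwo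
  have hone := hG.2 v a c _ hc hC hedges
  omega

lemma IsCactus.exists_intCast_eq_cyclePos_sub (hG : IsCactus G) {v : V} {c : G.Walk v v}
    (hc : c.IsCycle) {a b : V} (W : G.Walk a b) (ha : a ∈ c.support) (hb : b ∈ c.support) :
    ∃ s : ℤ, s.natAbs ≤ W.length ∧ (s : ZMod c.length) = c.cyclePos b - c.cyclePos a := by
  induction hn : W.length using Nat.strong_induction_on generalizing a b with
  | _ n ih =>
  by_cases! hsplit : ∃ m ∈ W.support, m ∈ c.support ∧ m ≠ a ∧ m ≠ b
  · obtain ⟨m, hmW, hmc, hma, hmb⟩ := hsplit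
    obtain ⟨s₁, hs₁, hs₁'⟩ :=
      ih _ (hn ▸ length_takeUntil_lt_length hmW hmb) (W.takeUntil m hmW) ha hmc rfl
    obtain ⟨s₂, hs₂, hs₂'⟩ :=
      ih _ (hn ▸ length_dropUntil_lt_length hmW hma) (W.dropUntil m hmW) hmc hb rfl
    have hlen := congrArg length (W.take_spec hmW)
    rw [length_append] at hlen
    refine ⟨s₁ + s₂, by omega, ?_⟩
    push_cast
    rw [hs₁', hs₂']
    ring
  · obtain rfl | hab := eq_or_ne a b
    · exact ⟨0, by simp⟩
    have hedge := hG.mk_mem_edges_of_isPath hc ha hb hab W.toPath.2 fun u hu huc => by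
      by_contra! h
      exact h.2 (hsplit u (support_toPath_subset_support W hu) huc h.1)
    have hW : W.length ≠ 0 := fun h => hab (eq_of_length_eq_zero h)
    rcases hc.cyclePos_sub_eq_one_or hedge with h | h
    · exact ⟨1, by omega, by simp [h]⟩
    · exact ⟨-1, by omega, by simp [h]⟩

lemma min_le_natAbs_of_intCast_eq {n m : ℕ} (hm : m ≤ n) {s : ℤ} (h : (s : ZMod n) = m) :
    min m (n - m) ≤ s.natAbs := by
  obtain ⟨q, hq⟩ := (ZMod.intCast_eq_intCast_iff_dvd_sub m s n).mp (by simpa using h.symm)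
  rcases lt_trichotomy q 0 with hq0 | rfl | hq0
  · have : (n : ℤ) * q ≤ -n := by nlinarith
    omega
  · omega
  · have : (n : ℤ) ≤ n * q := by nlinarith
    omega

theorem IsCactus.dist_getVert (hG : IsCactus G) {v : V} {c : G.Walk v v} (hc : c.IsCycle)
    {i j : ℕ} (hij : i ≤ j) (hj : j ≤ c.length) :
    G.dist (c.getVert i) (c.getVert j) = min (j - i) (c.length - (j - i)) := by
  refine le_antisymm (le_min (c.dist_getVert_le_sub hij) (c.dist_getVert_le_length_sub hij hj)) ?_
  obtain ⟨W, hW⟩ := hG.1.exists_walk_length_eq_dist (c.getVert i) (c.getVert j)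
  obtain ⟨s, hs, hs'⟩ := hG.exists_intCast_eq_cyclePos_sub hc W
    (c.getVert_mem_support i) (c.getVert_mem_support j)
  rw [hc.cyclePos_getVert hj, hc.cyclePos_getVert (hij.trans hj), ← Nat.cast_sub hij] at hs'
  exact hW ▸ (min_le_natAbs_of_intCast_eq (by omega) hs').trans hs

lemma IsCactus.exists_dist_eq_dist_of_mem_edges (hG : IsCactus G) {v x y : V} {c : G.Walk v v}
    (hc : c.IsCycle) (hodd : Odd c.length) (he : s(x, y) ∈ c.edges) :
    ∃ w, w ≠ x ∧ w ≠ y ∧ G.dist w x = G.dist w y := by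
  obtain ⟨k, hk⟩ := hodd
  have hk1 : 1 ≤ k := by have := hc.three_le_length; omega
  obtain ⟨i, hi, hxy⟩ := c.mk_mem_edges_iff_exists.mp he
  have hopp : ∃ w, G.dist w (c.getVert i) = k ∧ G.dist w (c.getVert (i + 1)) = k := by
    rcases lt_or_ge i k with hik | hik
    · refine ⟨c.getVert (i + k + 1), ?_, ?_⟩ <;>
        rw [dist_comm, hG.dist_getVert hc (by omega) (by omega)] <;> omega
    · refine ⟨c.getVert (i - k), ?_, ?_⟩ <;>
        rw [hG.dist_getVert hc (by omega) (by omega)] <;> omega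
  obtain ⟨w, hwx, hwy⟩ := hopp
  have hne : ∀ u, G.dist w u = k → w ≠ u := fun u hu h => by rw [h, dist_self] at hu; omega
  rcases Sym2.eq_iff.mp hxy with ⟨rfl, rfl⟩ | ⟨rfl, rfl⟩
  · exact ⟨w, hne _ hwx, hne _ hwy, hwx.trans hwy.symm⟩
  · exact ⟨w, hne _ hwy, hne _ hwx, hwy.trans hwx.symm⟩

lemma nclose_eq_card {x y : V} [Fintype V] :
    nclose G x y = #{w | w ≠ x ∧ w ≠ y ∧ G.dist w x < G.dist w y} := by
  rw [nclose, Nat.card_eq_fintype_card, Fintype.card_subtype]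
  rfl

lemma PIedge_le_card_sub_three [Fintype V] {x y w : V} (hxy : x ≠ y) (hwx : w ≠ x) (hwy : w ≠ y)
    (hw : G.dist w x = G.dist w y) :
    PIedge G s(x, y) ≤ Fintype.card V - 3 := by
  set A : Finset V := {u | u ≠ x ∧ u ≠ y ∧ G.dist u x < G.dist u y}
  set B : Finset V := {u | u ≠ y ∧ u ≠ x ∧ G.dist u y < G.dist u x}
  have hAB : Disjoint A B := by
    simp only [A, B, disjoint_filter]
    intro u _ hA hB
    omega
  have hsub : A ∪ B ⊆ univ \ {x, y, w} := by
    intro u hu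
    have hu' : u ≠ x ∧ u ≠ y ∧ G.dist u x ≠ G.dist u y := by
      simp only [A, B, mem_union, mem_filter, mem_univ, true_and] at hu
      rcases hu with ⟨hx, hy, hd⟩ | ⟨hy, hx, hd⟩ <;> exact ⟨hx, hy, by omega⟩
    simp only [mem_sdiff, mem_univ, mem_insert, mem_singleton, true_and]
    rintro (rfl | rfl | rfl)
    exacts [hu'.1 rfl, hu'.2.1 rfl, hu'.2.2 hw]
  have hxyw : #({x, y, w} : Finset V) = 3 := by
    rw [card_insert_of_notMem (by simp [hxy, hwx.symm]), card_pair hwy.symm]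
  have := card_le_card hsub
  rw [card_union_of_disjoint hAB, card_sdiff_of_subset (subset_univ _), hxyw, card_univ] at this
  simpa [PIedge, nclose_eq_card] using this

theorem stmt_12 [Fintype V] (G : SimpleGraph V) (hG : IsCactus G)
    (v : V) (c : G.Walk v v) (hc : c.IsCycle) (hodd : Odd c.length)
    (e : Sym2 V) (he : e ∈ c.edges) :
    PIedge G e ≤ Fintype.card V - 3 := by
  induction e using Sym2.ind with | _ x y =>
  obtain ⟨w, hwx, hwy, hw⟩ := hG.exists_dist_eq_dist_of_mem_edges hc hodd he
  exact PIedge_le_card_sub_three (c.adj_of_mem_edges he).ne hwx hwy hw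
end

section
/- Let G be a cactus on n vertices in which every cycle is a triangle (length 3), with t triangles and m cut edges (so n = 2t + m + 1). Then PI(G) = (n-1)(n-2) - 2t. -/
open SimpleGraph Finset
open scoped Classical

variable {V : Type*}

/-- The number of cycles of a graph, counted as edge sets of cycles. -/
noncomputable def numCycles (G : SimpleGraph V) : ℕ :=
  Set.ncard {s : Set (Sym2 V) |
    ∃ (v : V) (c : G.Walk v v), c.IsCycle ∧ s = {e | e ∈ c.edges}}

/-- The number of cut edges (bridges) of a graph. -/
noncomputable def numCutEdges (G : SimpleGraph V) : ℕ :=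
  Set.ncard {e : Sym2 V | G.IsBridge e}

/-!
For an edge `xy`, every vertex other than `x, y` is closer to `x`, closer to `y`, or equidistant
from both, so `PI(G) = |E| (n - 2) - #{(w, e) : w is equidistant from the ends of e}`.
If `w` is equidistant from the ends of `xy`, then shortest paths from `w` to `x` and to `y`, closed
up by `xy`, contain a cycle through `xy`; it is a triangle `xyz` with `z` one step closer to `w`.
In a cactus the triangle through an edge is unique, so each vertex is equidistant from exactly one
edge of every triangle and from no bridge: there are `n t` such pairs. Together with
`|E| = m + 3t` and `n = 2t + m + 1` this gives the formula.
-/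

def CyclesAreTriangles (G : SimpleGraph V) : Prop :=
  ∀ (v : V) (c : G.Walk v v), c.IsCycle → c.length = 3

def cycleEdgeSets (G : SimpleGraph V) : Set (Set (Sym2 V)) :=
  {s | ∃ (v : V) (c : G.Walk v v), c.IsCycle ∧ s = {e | e ∈ c.edges}}

noncomputable def triangleEdges (x y z : V) : Finset (Sym2 V) := {s(x, y), s(y, z), s(z, x)}

def Equidistant (G : SimpleGraph V) (w : V) : Sym2 V → Prop :=
  Sym2.lift ⟨fun x y => G.dist w x = G.dist w y, fun _ _ => propext eq_comm⟩

variable {G : SimpleGraph V}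

@[simp] lemma equidistant_mk {w x y : V} :
    Equidistant G w s(x, y) ↔ G.dist w x = G.dist w y := Iff.rfl

lemma SimpleGraph.Walk.dist_add_dist_le_length {u v w : V} (p : G.Walk u v)
    (hw : w ∈ p.support) : G.dist u w + G.dist w v ≤ p.length := by
  have := congr_arg Walk.length (p.take_spec hw)
  rw [Walk.length_append] at this
  have := dist_le (p.takeUntil w hw)
  have := dist_le (p.dropUntil w hw)
  omega

lemma triangleEdges_rotate (x y z : V) : triangleEdges x y z = triangleEdges y z x := by
  ext; simp only [triangleEdges, mem_insert, mem_singleton]; tauto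

lemma card_triangleEdges {x y z : V} (hxy : G.Adj x y) (hyz : G.Adj y z) (hzx : G.Adj z x) :
    #(triangleEdges x y z) = 3 := by
  have := hxy.ne; have := hyz.ne; have := hzx.ne'
  rw [triangleEdges, card_insert_of_notMem, card_pair] <;> simp [*, eq_comm]

lemma coe_triangleEdges_mem_cycleEdgeSets {x y z : V} (hxy : G.Adj x y) (hyz : G.Adj y z)
    (hzx : G.Adj z x) : ↑(triangleEdges x y z) ∈ cycleEdgeSets G := by
  refine ⟨x, .cons hxy (.cons hyz (.cons hzx .nil)), ?_, ?_⟩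
  · have := hxy.ne; have := hyz.ne; have := hzx.ne'
    simp [Walk.cons_isCycle_iff, Walk.isPath_def, *, eq_comm]
  · ext; simp [triangleEdges, Sym2.eq_swap]

lemma exists_eq_triangleEdges_of_mem_cycleEdgeSets (h : CyclesAreTriangles G)
    {T : Set (Sym2 V)} (hT : T ∈ cycleEdgeSets G) :
    ∃ x y z, G.Adj x y ∧ G.Adj y z ∧ G.Adj z x ∧ T = ↑(triangleEdges x y z) := by
  obtain ⟨u, c, hc, rfl⟩ := hT
  have hc3 := h u c hc
  rcases c with _ | ⟨hxy, _ | ⟨hyz, _ | ⟨hzx, _ | _⟩⟩⟩ <;> simp at hc3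
  refine ⟨_, _, _, hxy, hyz, hzx, ?_⟩
  ext; simp [triangleEdges]

lemma mem_edgeSet_of_mem_cycleEdgeSets {T : Set (Sym2 V)} (hT : T ∈ cycleEdgeSets G)
    {e : Sym2 V} (he : e ∈ T) : e ∈ G.edgeSet := by
  obtain ⟨u, c, hc, rfl⟩ := hT
  exact c.edges_subset_edgeSet he

lemma not_isBridge_of_mem_cycleEdgeSets {T : Set (Sym2 V)} (hT : T ∈ cycleEdgeSets G)
    {e : Sym2 V} (he : e ∈ T) : ¬ G.IsBridge e := by
  obtain ⟨u, c, hc, rfl⟩ := hT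
  exact fun hb => hb.notMem_edges_of_isCycle hc he

lemma IsCactus.eq_of_mem_cycleEdgeSets (hG : IsCactus G) {S₁ S₂ : Set (Sym2 V)}
    (h₁ : S₁ ∈ cycleEdgeSets G) (h₂ : S₂ ∈ cycleEdgeSets G) {e : Sym2 V}
    (he₁ : e ∈ S₁) (he₂ : e ∈ S₂) : S₁ = S₂ := by
  obtain ⟨u, c₁, hc₁, rfl⟩ := h₁
  obtain ⟨v, c₂, hc₂, rfl⟩ := h₂
  by_contra hne
  obtain ⟨a, b⟩ := e
  have hsub : ({a, b} : Set V) ⊆ {x | x ∈ c₁.support ∧ x ∈ c₂.support} := by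
    rintro _ (rfl | rfl)
    · exact ⟨c₁.fst_mem_support_of_mem_edges he₁, c₂.fst_mem_support_of_mem_edges he₂⟩
    · exact ⟨c₁.snd_mem_support_of_mem_edges he₁, c₂.snd_mem_support_of_mem_edges he₂⟩
  have := (Set.ncard_le_ncard hsub (c₁.support.finite_toSet.subset fun _ hx => hx.1)).trans
    (hG.2 u v c₁ c₂ hc₁ hc₂ hne)
  rw [Set.ncard_pair (c₁.adj_of_mem_edges he₁).ne] at this
  omega

lemma IsCactus.eq_of_adj_of_adj (hG : IsCactus G) {x y z z' : V} (hxy : G.Adj x y)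
    (hyz : G.Adj y z) (hzx : G.Adj z x) (hyz' : G.Adj y z') (hz'x : G.Adj z' x) : z' = z := by
  have hT := hG.eq_of_mem_cycleEdgeSets (coe_triangleEdges_mem_cycleEdgeSets hxy hyz' hz'x)
    (coe_triangleEdges_mem_cycleEdgeSets hxy hyz hzx) (e := s(x, y)) (by simp [triangleEdges])
    (by simp [triangleEdges])
  have hmem : s(y, z') ∈ (↑(triangleEdges x y z) : Set (Sym2 V)) := by
    rw [← hT]; simp [triangleEdges]
  have := hxy.ne; have := hyz.ne; have := hz'x.ne
  simp only [triangleEdges, coe_insert, coe_singleton, Set.mem_insert_iff,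
    Set.mem_singleton_iff, Sym2.eq_iff] at hmem
  grind

lemma exists_mem_support_adj_adj (h : CyclesAreTriangles G) {x y : V} (hxy : G.Adj x y)
    (W : G.Walk x y) (hW : s(x, y) ∉ W.edges) : ∃ z ∈ W.support, G.Adj x z ∧ G.Adj z y := by
  have hcycle : (Walk.cons hxy.symm W.bypass).IsCycle := by
    rw [Walk.cons_isCycle_iff, Sym2.eq_swap]
    exact ⟨W.bypass_isPath, fun he => hW (W.edges_bypass_subset_edges he)⟩
  have hlen : W.bypass.length = 2 := by
    have := h _ _ hcycle
    rw [Walk.length_cons] at this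
    omega
  refine ⟨W.bypass.getVert 1,
    W.support_bypass_subset_support (W.bypass.getVert_mem_support 1),
    by simpa using W.bypass.adj_getVert_succ (i := 0) (by omega), ?_⟩
  have := W.bypass.adj_getVert_succ (i := 1) (by omega)
  rwa [show 1 + 1 = W.bypass.length by omega, Walk.getVert_length] at this

lemma exists_adj_adj_dist_add_one_eq (hc : G.Connected) (h : CyclesAreTriangles G)
    {w x y : V} (hxy : G.Adj x y) (hd : G.dist w x = G.dist w y) :
    ∃ z, G.Adj y z ∧ G.Adj z x ∧ G.dist w z + 1 = G.dist w x := by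
  obtain ⟨p, hp⟩ := hc.exists_walk_length_eq_dist w x
  obtain ⟨q, hq⟩ := hc.exists_walk_length_eq_dist w y
  have hyp : y ∉ p.support := fun hy => by
    have := p.dist_add_dist_le_length hy
    have := hc.pos_dist_of_ne hxy.ne'
    omega
  have hxq : x ∉ q.support := fun hx => by
    have := q.dist_add_dist_le_length hx
    have := hc.pos_dist_of_ne hxy.ne
    omega
  have hW : s(x, y) ∉ (p.reverse.append q).edges := by
    simp only [Walk.edges_append, Walk.edges_reverse, List.mem_append, List.mem_reverse]
    rintro (he | he)
    · exact hyp (p.snd_mem_support_of_mem_edges he)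
    · exact hxq (q.fst_mem_support_of_mem_edges he)
  obtain ⟨z, hz, hxz, hzy⟩ := exists_mem_support_adj_adj h hxy _ hW
  refine ⟨z, hzy.symm, hxz.symm, ?_⟩
  have := hxz.diff_dist_adj (u := w)
  have := hzy.diff_dist_adj (u := w)
  rw [Walk.mem_support_append_iff, Walk.support_reverse, List.mem_reverse] at hz
  rcases hz with hz | hz
  · have := p.dist_add_dist_le_length hz
    have := hc.pos_dist_of_ne hxz.ne'
    omega
  · have := q.dist_add_dist_le_length hz
    have := hc.pos_dist_of_ne hzy.ne
    omega

lemma dist_add_one_eq_of_dist_eq (hG : IsCactus G) (h : CyclesAreTriangles G) {w x y z : V}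
    (hxy : G.Adj x y) (hyz : G.Adj y z) (hzx : G.Adj z x) (hd : G.dist w x = G.dist w y) :
    G.dist w z + 1 = G.dist w x := by
  obtain ⟨z', hyz', hz'x, hz'⟩ := exists_adj_adj_dist_add_one_eq hG.1 h hxy hd
  rwa [hG.eq_of_adj_of_adj hxy hyz hzx hyz' hz'x] at hz'

lemma filter_equidistant_triangleEdges (hG : IsCactus G) (h : CyclesAreTriangles G)
    {w x y z : V} (hxy : G.Adj x y) (hyz : G.Adj y z) (hzx : G.Adj z x)
    (hd : G.dist w x = G.dist w y) :
    (triangleEdges x y z).filter (Equidistant G w) = {s(x, y)} := by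
  have := dist_add_one_eq_of_dist_eq hG h hxy hyz hzx hd
  rw [triangleEdges, filter_insert, filter_insert, filter_singleton]
  simp only [equidistant_mk, hd, if_true]
  rw [if_neg (by omega), if_neg (by omega), insert_empty]

lemma card_filter_equidistant_triangleEdges (hG : IsCactus G) (h : CyclesAreTriangles G)
    (w : V) {x y z : V} (hxy : G.Adj x y) (hyz : G.Adj y z) (hzx : G.Adj z x) :
    #((triangleEdges x y z).filter (Equidistant G w)) = 1 := by
  have := hxy.diff_dist_adj (u := w)
  have := hyz.diff_dist_adj (u := w)
  have := hzx.diff_dist_adj (u := w)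
  by_cases hxy' : G.dist w x = G.dist w y
  · rw [filter_equidistant_triangleEdges hG h hxy hyz hzx hxy', card_singleton]
  by_cases hyz' : G.dist w y = G.dist w z
  · rw [triangleEdges_rotate, filter_equidistant_triangleEdges hG h hyz hzx hxy hyz',
      card_singleton]
  have hzx' : G.dist w z = G.dist w x := by omega
  rw [← triangleEdges_rotate, filter_equidistant_triangleEdges hG h hzx hxy hyz hzx',
    card_singleton]

lemma PIedge_add_card_equidistant [Fintype V] {x y : V} (hxy : G.Adj x y) :
    PIedge G s(x, y) + #{w | Equidistant G w s(x, y)} + 2 = Fintype.card V := by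
  have hdxy : G.dist x y = 1 := dist_eq_one_iff_adj.2 hxy
  have hdyx : G.dist y x = 1 := dist_eq_one_iff_adj.2 hxy.symm
  have hsplit : ∀ w, 1 =
      ((if w ≠ x ∧ w ≠ y ∧ G.dist w x < G.dist w y then 1 else 0) +
        (if w ≠ y ∧ w ≠ x ∧ G.dist w y < G.dist w x then 1 else 0) +
        (if G.dist w x = G.dist w y then 1 else 0)) + ((if x = w then 1 else 0) +
        (if y = w then 1 else 0)) := by
    intro w
    rcases eq_or_ne w x with rfl | hwx
    · simp [hxy.ne', hdxy]
    rcases eq_or_ne w y with rfl | hwy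
    · simp [hxy.ne, hdyx]
    simp only [hwx, hwy, ne_eq, not_false_eq_true, true_and, if_neg hwx.symm, if_neg hwy.symm]
    split_ifs <;> omega
  simp only [PIedge, Sym2.lift_mk, nclose, Nat.card_coe_set_eq, Set.ncard_eq_toFinset_card',
    Set.toFinset_ofPred, equidistant_mk, card_filter]
  rw [← card_univ, card_eq_sum_ones, sum_congr rfl fun w _ => hsplit w, sum_add_distrib,
    sum_add_distrib, sum_add_distrib, sum_add_distrib, sum_ite_eq, sum_ite_eq,
    if_pos (mem_univ x), if_pos (mem_univ y)]

lemma PI_add_sum_card_equidistant [Fintype V] (G : SimpleGraph V) :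
    PI G + ∑ e ∈ G.edgeFinset, #{w | Equidistant G w e} + 2 * #G.edgeFinset =
      #G.edgeFinset * Fintype.card V := by
  calc _ = ∑ e ∈ G.edgeFinset, (PIedge G e + #{w | Equidistant G w e} + 2) := by
        simp only [PI, sum_add_distrib, sum_const, smul_eq_mul, mul_comm]
    _ = ∑ _e ∈ G.edgeFinset, Fintype.card V := sum_congr rfl fun e he => by
        obtain ⟨x, y⟩ := e
        exact PIedge_add_card_equidistant (mem_edgeFinset.1 he)
    _ = _ := by rw [sum_const, smul_eq_mul]

section Counting

variable [Fintype V]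

noncomputable def cycleFinset (G : SimpleGraph V) : Finset (Set (Sym2 V)) :=
  (cycleEdgeSets G).toFinite.toFinset

lemma card_cycleFinset : #(cycleFinset G) = numCycles G :=
  (Set.ncard_eq_toFinset_card _ _).symm

lemma IsCactus.card_filter_mem_cycleFinset (hG : IsCactus G) {T : Set (Sym2 V)}
    (hT : T ∈ cycleEdgeSets G) {e : Sym2 V} (he : e ∈ T) :
    #{S ∈ cycleFinset G | e ∈ S} = 1 := by
  refine card_eq_one.2 ⟨T, ?_⟩
  ext S
  simp only [cycleFinset, mem_filter, Set.Finite.mem_toFinset, mem_singleton]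
  exact ⟨fun ⟨hS, heS⟩ => hG.eq_of_mem_cycleEdgeSets hS hT heS he,
    by rintro rfl; exact ⟨hT, he⟩⟩

lemma card_filter_equidistant_edgeFinset (hG : IsCactus G) (h : CyclesAreTriangles G) (w : V) :
    #{e ∈ G.edgeFinset | Equidistant G w e} = numCycles G := by
  rw [← card_cycleFinset, ← mul_one #{e ∈ G.edgeFinset | Equidistant G w e},
    ← mul_one #(cycleFinset G)]
  refine card_mul_eq_card_mul (fun e (T : Set (Sym2 V)) => e ∈ T) (fun e he => ?_)
    (fun T hT => ?_)
  · simp only [mem_filter, mem_edgeFinset] at he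
    obtain ⟨x, y⟩ := e
    obtain ⟨z, hyz, hzx, -⟩ := exists_adj_adj_dist_add_one_eq hG.1 h he.1 he.2
    exact hG.card_filter_mem_cycleFinset (coe_triangleEdges_mem_cycleEdgeSets he.1 hyz hzx)
      (by simp [triangleEdges])
  · simp only [cycleFinset, Set.Finite.mem_toFinset] at hT
    obtain ⟨x, y, z, hxy, hyz, hzx, rfl⟩ := exists_eq_triangleEdges_of_mem_cycleEdgeSets h hT
    rw [← card_filter_equidistant_triangleEdges hG h w hxy hyz hzx]
    congr 1
    ext e
    simp only [bipartiteBelow, mem_filter, mem_coe, mem_edgeFinset]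
    exact ⟨fun ⟨⟨_, he⟩, heT⟩ => ⟨heT, he⟩, fun ⟨heT, he⟩ =>
      ⟨⟨mem_edgeSet_of_mem_cycleEdgeSets hT heT, he⟩, heT⟩⟩

lemma card_filter_isBridge_edgeFinset (hc : G.Connected) :
    #{e ∈ G.edgeFinset | G.IsBridge e} = numCutEdges G := by
  rw [numCutEdges, Set.ncard_eq_toFinset_card', Set.toFinset_ofPred]
  congr 1
  ext e
  simp only [mem_filter, mem_edgeFinset, mem_univ, true_and, and_iff_right_iff_imp]
  obtain ⟨x, y⟩ := e
  exact fun hb => hb.reachable_iff_adj.1 (hc.preconnected x y)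

lemma card_filter_not_isBridge_edgeFinset (hG : IsCactus G) (h : CyclesAreTriangles G) :
    #{e ∈ G.edgeFinset | ¬ G.IsBridge e} = 3 * numCycles G := by
  rw [← card_cycleFinset, ← mul_one #{e ∈ G.edgeFinset | ¬ G.IsBridge e}, mul_comm 3]
  refine card_mul_eq_card_mul (fun e (T : Set (Sym2 V)) => e ∈ T) (fun e he => ?_)
    (fun T hT => ?_)
  · rw [mem_filter, mem_edgeFinset] at he
    have := (isBridge_iff_forall_cycle_notMem he.1).not.1 he.2
    push Not at this
    obtain ⟨u, c, hc, hec⟩ := this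
    exact hG.card_filter_mem_cycleFinset ⟨u, c, hc, rfl⟩ hec
  · simp only [cycleFinset, Set.Finite.mem_toFinset] at hT
    obtain ⟨x, y, z, hxy, hyz, hzx, rfl⟩ := exists_eq_triangleEdges_of_mem_cycleEdgeSets h hT
    rw [← card_triangleEdges hxy hyz hzx]
    congr 1
    ext e
    simp only [bipartiteBelow, mem_filter, mem_coe, mem_edgeFinset, and_iff_right_iff_imp]
    exact fun heT => ⟨mem_edgeSet_of_mem_cycleEdgeSets hT heT,
      not_isBridge_of_mem_cycleEdgeSets hT heT⟩

lemma sum_card_equidistant (hG : IsCactus G) (h : CyclesAreTriangles G) :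
    ∑ e ∈ G.edgeFinset, #{w | Equidistant G w e} = Fintype.card V * numCycles G := by
  calc _ = ∑ w, #{e ∈ G.edgeFinset | Equidistant G w e} :=
        sum_card_bipartiteAbove_eq_sum_card_bipartiteBelow fun e w => Equidistant G w e
    _ = _ := by simp [card_filter_equidistant_edgeFinset hG h]

lemma card_edgeFinset_eq (hG : IsCactus G) (h : CyclesAreTriangles G) :
    #G.edgeFinset = numCutEdges G + 3 * numCycles G := by
  rw [← card_filter_add_card_filter_not G.IsBridge, card_filter_isBridge_edgeFinset hG.1,
    card_filter_not_isBridge_edgeFinset hG h]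

end Counting

theorem stmt_17 [Fintype V] (G : SimpleGraph V) (hG : IsCactus G)
    (hlen : ∀ (v : V) (c : G.Walk v v), c.IsCycle → c.length = 3)
    (hn : Fintype.card V = 2 * numCycles G + numCutEdges G + 1) :
    PI G = (Fintype.card V - 1) * (Fintype.card V - 2) - 2 * numCycles G := by
  have hPI := PI_add_sum_card_equidistant G
  rw [sum_card_equidistant hG hlen, card_edgeFinset_eq hG hlen] at hPI
  suffices PI G + 2 * numCycles G = (Fintype.card V - 1) * (Fintype.card V - 2) by omega
  obtain h | h := Nat.eq_zero_or_pos (2 * numCycles G + numCutEdges G)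
  · obtain ⟨ht, hm⟩ : numCycles G = 0 ∧ numCutEdges G = 0 := by omega
    simp_all
  zify [show 2 ≤ Fintype.card V by omega, show 1 ≤ Fintype.card V by omega] at hPI hn ⊢
  linear_combination hPI + (2 - (Fintype.card V : ℤ)) * hn
end
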